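/- arXiv:0906.1317 — 2 statements merged into one kernel-verified Lean document; each statement's English description precedes it below -/
import Mathlib

section
/- For all nonnegative integers n and r with r ≤ n, the sum over k from r to floor((n+r)/2) of binomial(n, 2k-r) * binomial(2k-r, k) * 2^(n-2k+r) equals binomial(2n, n-r). -/
open Nat Finset
open Polynomial

/-!
Since `(1 + X) ^ 2 = (1 + X ^ 2) + 2 X`, the binomial theorem gives
`(1 + X) ^ (2n) = ∑ₘ C(n, m) 2 ^ (n - m) X ^ (n - m) (1 + X ^ 2) ^ m`.
Reading off the coefficient of `X ^ (n + r)`, only `m = 2k - r` contributes, with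
`C(m, k)` from `(1 + X ^ 2) ^ m`; and `C(2n, n + r) = C(2n, n - r)`.
-/

theorem Polynomial.coeff_one_add_X_sq_pow {R : Type*} [CommSemiring R] (m t : ℕ) :
    ((1 + X ^ 2 : R[X]) ^ m).coeff t = if 2 ∣ t then (m.choose (t / 2) : R) else 0 := by
  have : (1 + X ^ 2 : R[X]) ^ m = expand R 2 ((1 + X) ^ m) := by
    simp only [map_pow, map_add, map_one, expand_X]
  rw [this, coeff_expand two_pos, coeff_one_add_X_pow]

theorem Polynomial.one_add_X_pow_two_mul_eq_sum {R : Type*} [CommSemiring R] (n : ℕ) :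
    (1 + X : R[X]) ^ (2 * n) =
      ∑ m ∈ range (n + 1),
        C ((n.choose m * 2 ^ (n - m) : ℕ) : R) * X ^ (n - m) * (1 + X ^ 2) ^ m := by
  rw [pow_mul, show (1 + X : R[X]) ^ 2 = (1 + X ^ 2) + C 2 * X by rw [C_ofNat]; ring, add_pow]
  refine sum_congr rfl fun m _ => ?_
  rw [mul_pow, ← C_pow]
  push_cast
  simp only [map_mul, map_natCast]
  ring

theorem Nat.choose_two_mul_add_eq_sum (n r : ℕ) :
    (2 * n).choose (n + r) = ∑ m ∈ range (n + 1),
      n.choose m * 2 ^ (n - m) * if 2 ∣ m + r then m.choose ((m + r) / 2) else 0 := by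
  rw [← Nat.cast_id ((2 * n).choose (n + r)), ← coeff_one_add_X_pow ℕ,
    one_add_X_pow_two_mul_eq_sum, finsetSum_coeff]
  refine sum_congr rfl fun m hm => ?_
  have hmn : m ≤ n := Nat.lt_succ_iff.mp (mem_range.mp hm)
  rw [mul_assoc, coeff_C_mul, coeff_X_pow_mul', if_pos (by omega),
    show n + r - (n - m) = m + r by omega, coeff_one_add_X_sq_pow]
  simp

theorem stmt3 (n r : ℕ) (h : r ≤ n) :
    ∑ k ∈ Finset.Icc r ((n+r)/2), n.choose (2*k-r) * (2*k-r).choose k * 2^(n+r-2*k)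
      = (2*n).choose (n-r) := by
  let term m := n.choose m * 2 ^ (n - m) * if 2 ∣ m + r then m.choose ((m + r) / 2) else 0
  have term_ne_zero {m : ℕ} (hm : term m ≠ 0) : r ≤ m ∧ 2 ∣ m + r := by
    simp only [term] at hm
    split_ifs at hm with heven
    · refine ⟨?_, heven⟩
      by_contra! hmr
      exact hm (by rw [choose_eq_zero_of_lt (n := m) (by omega), mul_zero])
    · exact absurd (mul_zero _) hm
  calc _ = ∑ m ∈ range (n + 1) with r ≤ m ∧ 2 ∣ m + r, term m := by
        refine sum_nbij' (fun k => 2 * k - r) (fun m => (m + r) / 2) ?_ ?_ ?_ ?_ ?_ <;>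
          simp only [mem_Icc, mem_filter, mem_range]
        · omega
        · omega
        · omega
        · omega
        · intro k hk
          simp only [term]
          rw [if_pos (by omega), show (2 * k - r + r) / 2 = k by omega,
            show n - (2 * k - r) = n + r - 2 * k by omega, mul_right_comm]
    _ = ∑ m ∈ range (n + 1), term m := sum_filter_of_ne fun _ _ => term_ne_zero
    _ = (2 * n).choose (n + r) := (choose_two_mul_add_eq_sum n r).symm
    _ = (2 * n).choose (n - r) := choose_symm_of_eq_add (by omega)
end

section
/- For all nonnegative integers n and m, the sum over j from 0 to n of binomial(j+2m+1, j) * 2^(j+1) * binomial(2n-j, n-j) equals m! * (2n+2m+2)! / (n! * (2m+1)! * (n+m+1)!). -/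
/-!
Write `S N` for the sum. Creative telescoping (Zeilberger's algorithm) gives the first-order
recurrence `(N + 1) S (N + 1) = (4N + 4m + 6) S N`: summand by summand it holds up to the
difference of consecutive values of the certificate `j · C(j+2m+1, j) 2^(j+1) · C(2N+1-j, N+1-j)`,
which vanishes at `j = 0` and equals the extra summand of `(N + 1) S (N + 1)` at `j = N + 1`.
The closed form obeys the same recurrence, and both sides equal `2` at `N = 0`.
-/

open Nat Finset

theorem Finset.sum_range_add_eq_of_telescoping {M : Type*} [AddCommMonoid M] {a b g : ℕ → M}
    {n : ℕ} (h : ∀ j < n, a j + g (j + 1) = b j + g j) :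
    ∑ j ∈ range n, a j + g n = ∑ j ∈ range n, b j + g 0 := by
  induction n with
  | zero => simp
  | succ n ih =>
    rw [sum_range_succ, sum_range_succ, add_assoc, h n n.lt_succ_self, add_left_comm,
      ih fun j hj => h j (by omega)]
    abel

theorem Nat.choose_add_two_mul_contiguous (j k : ℕ) :
    (j + k + 1) * (j + 2 * k + 2).choose (k + 1)
      = 2 * (j + 2 * k + 1) * (j + 2 * k).choose k + j * (j + 2 * k + 1).choose (k + 1) := by
  apply Nat.eq_of_mul_eq_mul_left k.succ_pos
  have h₁ := Nat.add_one_mul_choose_eq (j + 2 * k + 1) k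
  have h₂ := Nat.choose_mul_succ_eq (j + 2 * k) k
  have h₃ := Nat.add_one_mul_choose_eq (j + 2 * k) k
  rw [show j + 2 * k + 1 - k = j + k + 1 by omega] at h₂
  zify at h₁ h₂ h₃ ⊢
  linear_combination (-(j + k + 1 : ℤ)) * h₁ - (j + 2 * k + 2 : ℤ) * h₂ + (j : ℤ) * h₃

namespace CentralBinomialSum

variable (m : ℕ)

def coeff (j : ℕ) : ℕ := (j + 2 * m + 1).choose j * 2 ^ (j + 1)

def term (N j : ℕ) : ℕ := coeff m j * (2 * N - j).choose (N - j)

def sum (N : ℕ) : ℕ := ∑ j ∈ range (N + 1), term m N j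

def certificate (N j : ℕ) : ℕ := j * (coeff m j * (2 * N + 1 - j).choose (N + 1 - j))

theorem succ_mul_coeff_succ (j : ℕ) :
    (j + 1) * coeff m (j + 1) = 2 * (j + 2 * m + 2) * coeff m j := by
  have h := Nat.add_one_mul_choose_eq (j + 2 * m + 1) j
  simp only [coeff, pow_succ]
  rw [show j + 1 + 2 * m + 1 = j + 2 * m + 1 + 1 by ring]
  linear_combination 2 ^ j * 2 * 2 * h.symm

theorem term_telescoping {N j : ℕ} (hj : j ≤ N) :
    (N + 1) * term m (N + 1) j + certificate m N (j + 1)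
      = (4 * N + 4 * m + 6) * term m N j + certificate m N j := by
  obtain ⟨k, rfl⟩ := Nat.exists_eq_add_of_le hj
  have hc := succ_mul_coeff_succ m j
  have hb := Nat.choose_add_two_mul_contiguous j k
  simp only [term, certificate]
  rw [show 2 * (j + k + 1) - j = j + 2 * k + 2 by omega, show j + k + 1 - j = k + 1 by omega,
    show 2 * (j + k) + 1 - (j + 1) = j + 2 * k by omega, show j + k + 1 - (j + 1) = k by omega,
    show 2 * (j + k) - j = j + 2 * k by omega, show j + k - j = k by omega,
    show 2 * (j + k) + 1 - j = j + 2 * k + 1 by omega]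
  linear_combination coeff m j * hb + (j + 2 * k).choose k * hc

theorem succ_mul_sum_succ (N : ℕ) : (N + 1) * sum m (N + 1) = (4 * N + 4 * m + 6) * sum m N := by
  have htel := sum_range_add_eq_of_telescoping (n := N + 1)
    (a := fun j => (N + 1) * term m (N + 1) j) (b := fun j => (4 * N + 4 * m + 6) * term m N j)
    (g := certificate m N) fun j hj => term_telescoping m (Nat.lt_succ_iff.mp hj)
  have hlast : certificate m N (N + 1) = (N + 1) * term m (N + 1) (N + 1) := by
    simp [certificate, term, two_mul]
  have hfirst : certificate m N 0 = 0 := zero_mul _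
  rw [hlast, hfirst, add_zero] at htel
  rw [sum, sum, mul_sum, mul_sum, sum_range_succ _ (N + 1), ← htel]

theorem sum_mul_factorials (N : ℕ) :
    N ! * ((2 * m + 1)! * (N + m + 1)!) * sum m N = m ! * (2 * N + 2 * m + 2)! := by
  induction N with
  | zero =>
    have hsum : sum m 0 = 2 := by simp [sum, term, coeff]
    rw [hsum, show 2 * 0 + 2 * m + 2 = 2 * m + 1 + 1 by ring, factorial_succ (2 * m + 1),
      zero_add, factorial_succ m, factorial_zero]
    ring
  | succ N ih =>
    calc (N + 1)! * ((2 * m + 1)! * (N + 1 + m + 1)!) * sum m (N + 1)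
        = (N + m + 2) * (N ! * ((2 * m + 1)! * (N + m + 1)!)) * ((N + 1) * sum m (N + 1)) := by
          rw [Nat.factorial_succ N, show N + 1 + m + 1 = N + m + 1 + 1 by ring,
            Nat.factorial_succ (N + m + 1)]
          ring
      _ = (N + m + 2) * (4 * N + 4 * m + 6) * (m ! * (2 * N + 2 * m + 2)!) := by
          rw [succ_mul_sum_succ, ← ih]
          ring
      _ = m ! * (2 * (N + 1) + 2 * m + 2)! := by
          rw [show 2 * (N + 1) + 2 * m + 2 = 2 * N + 2 * m + 2 + 1 + 1 by ring,
            Nat.factorial_succ (2 * N + 2 * m + 2 + 1), Nat.factorial_succ (2 * N + 2 * m + 2)]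
          ring

end CentralBinomialSum

theorem stmt17 (n m : ℕ) :
    ∑ j ∈ Finset.range (n+1), (j+2*m+1).choose j * 2^(j+1) * (2*n-j).choose (n-j)
      = m ! * (2*n+2*m+2)! / (n ! * ((2*m+1)! * (n+m+1)!)) := by
  rw [← CentralBinomialSum.sum_mul_factorials m n, Nat.mul_div_cancel_left _ (by positivity)]
  rfl
end
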